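/- Implication elimination: for every pGCL program s, pDL formulae φ₁, φ₂, and expectation lower bound p, the implication φ₁ ⟹ [s]_p φ₂ is valid (holds in all valuations) if and only if [s]_{p↓φ₁} φ₂ is valid, where (p↓φ₁)(σ) = p(σ)·[φ₁](σ) is the truncation of p to φ₁. -/

import Mathlib

namespace PGCL

/-- Program valuations: maps from program variables to real values. -/
abbrev PVal : Type := String → ℝ

/-- Logical environments: maps from logical variables to their values.
    Logical variables are disjoint from program variables and cannot be
    accessed by programs. -/
abbrev LEnv : Type := String → ℝ

/-- Syntax of the probabilistic guarded command language pGCL.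
    Expressions are embedded shallowly as functions of the valuation. -/
inductive Stmt : Type
  | skip : Stmt
  | assign (x : String) (e : PVal → ℝ) : Stmt
  | seq (s₁ s₂ : Stmt) : Stmt
  /-- demonic (non-deterministic) choice `s₁ ⊓ s₂` -/
  | dem (s₁ s₂ : Stmt) : Stmt
  /-- probabilistic choice `s₁ [e] s₂` -/
  | prob (e : PVal → ℝ) (s₁ s₂ : Stmt) : Stmt
  | ifte (e : PVal → Bool) (s₁ s₂ : Stmt) : Stmt
  | whileLoop (e : PVal → Bool) (s : Stmt) : Stmt

/-- States of the MDP semantics: a valuation paired with the remaining program.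
    `(ε, Stmt.skip)` is final. -/
abbrev PState : Type := PVal × Stmt

/-- A positional policy resolves each demonic choice (true = left branch). -/
abbrev Policy : Type := PState → Bool

/-- One-step transition relation of the MDP semantics of pGCL, under policy `π`:
    `Step π σ p σ'` means σ steps to σ' with probability `p`. -/
inductive Step (π : Policy) : PState → ℝ → PState → Prop
  | assign {ε : PVal} {x : String} {e : PVal → ℝ} :
      Step π (ε, Stmt.assign x e) 1 (Function.update ε x (e ε), Stmt.skip)
  | seqSkip {ε ε' : PVal} {s₁ s₂ : Stmt} {p : ℝ} :
      Step π (ε, s₁) p (ε', s₂) → Step π (ε, Stmt.seq Stmt.skip s₁) p (ε', s₂)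
  | seqStep {ε ε' : PVal} {s₁ s₂ s : Stmt} {p : ℝ} :
      Step π (ε, s₁) p (ε', s₂) → Step π (ε, Stmt.seq s₁ s) p (ε', Stmt.seq s₂ s)
  | probL {ε : PVal} {e : PVal → ℝ} {s₁ s₂ : Stmt} :
      0 ≤ e ε → e ε ≤ 1 → Step π (ε, Stmt.prob e s₁ s₂) (e ε) (ε, s₁)
  | probR {ε : PVal} {e : PVal → ℝ} {s₁ s₂ : Stmt} :
      0 ≤ e ε → e ε ≤ 1 → Step π (ε, Stmt.prob e s₁ s₂) (1 - e ε) (ε, s₂)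
  | demL {ε : PVal} {s₁ s₂ : Stmt} :
      π (ε, Stmt.dem s₁ s₂) = true → Step π (ε, Stmt.dem s₁ s₂) 1 (ε, s₁)
  | demR {ε : PVal} {s₁ s₂ : Stmt} :
      π (ε, Stmt.dem s₁ s₂) = false → Step π (ε, Stmt.dem s₁ s₂) 1 (ε, s₂)
  | iteT {ε : PVal} {e : PVal → Bool} {s₁ s₂ : Stmt} :
      e ε = true → Step π (ε, Stmt.ifte e s₁ s₂) 1 (ε, s₁)
  | iteF {ε : PVal} {e : PVal → Bool} {s₁ s₂ : Stmt} :
      e ε = false → Step π (ε, Stmt.ifte e s₁ s₂) 1 (ε, s₂)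
  | whileT {ε : PVal} {e : PVal → Bool} {s : Stmt} :
      e ε = true →
        Step π (ε, Stmt.whileLoop e s) 1 (ε, Stmt.seq s (Stmt.whileLoop e s))
  | whileF {ε : PVal} {e : PVal → Bool} {s : Stmt} :
      e ε = false → Step π (ε, Stmt.whileLoop e s) 1 (ε, Stmt.skip)

/-- Finite paths under a policy `π` from a state to a final state. -/
inductive MPath (π : Policy) : PState → Type
  | nil (ε : PVal) : MPath π (ε, Stmt.skip)
  | cons {σ σ' : PState} (p : ℝ) (h : Step π σ p σ') (rest : MPath π σ') : MPath π σ

/-- The probability of a path: the product of its transition probabilities. -/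
noncomputable def MPath.prob {π : Policy} : {σ : PState} → MPath π σ → ℝ
  | _, .nil _ => 1
  | _, .cons p _ rest => p * rest.prob

/-- The valuation in the final state of a path. -/
def MPath.finalVal {π : Policy} : {σ : PState} → MPath π σ → PVal
  | _, .nil ε => ε
  | _, .cons _ _ rest => rest.finalVal

/-- Expected reward `E_{σ,π} r`: the sum over all paths from σ under π of the
    probability of the path times the reward of its final valuation. -/
noncomputable def expReward (π : Policy) (σ : PState) (r : PVal → ℝ) : ℝ :=
  ∑' ρ : MPath π σ, ρ.prob * r ρ.finalVal

/-- Expectation `𝔼_σ r`: infimum over all policies of the expected reward. -/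
noncomputable def expectation (σ : PState) (r : PVal → ℝ) : ℝ :=
  ⨅ π : Policy, expReward π σ r

open Classical in
/-- Characteristic (indicator) function of a proposition. -/
noncomputable def ind (P : Prop) : ℝ := if P then 1 else 0

/-- Formulae of probabilistic dynamic logic pDL. Atomic formulae are embedded
    shallowly as predicates over the program valuation and logical environment. -/
inductive Formula : Type
  | atom (A : PVal → LEnv → Prop) : Formula
  | neg (φ : Formula) : Formula
  | conj (φ₁ φ₂ : Formula) : Formula
  /-- universal quantification over the logical variable `l` (domain ℝ) -/
  | all (l : String) (φ : Formula) : Formula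
  /-- the p-box modality `[s]_p φ` -/
  | box (s : Stmt) (p : PVal → ℝ) (φ : Formula) : Formula

/-- Satisfaction `ε, η ⊨ φ` of pDL formulae. -/
def Sat : Formula → PVal → LEnv → Prop
  | .atom A, ε, η => A ε η
  | .neg φ, ε, η => ¬ Sat φ ε η
  | .conj φ₁ φ₂, ε, η => Sat φ₁ ε η ∧ Sat φ₂ ε η
  | .all l φ, ε, η => ∀ v : ℝ, Sat φ ε (Function.update η l v)
  | .box s p φ, ε, η => p ε ≤ expectation (ε, s) (fun ε' => ind (Sat φ ε' η))

/-- Disjunction `φ₁ ∨ φ₂ := ¬(¬φ₁ ∧ ¬φ₂)`. -/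
def Formula.disj (φ₁ φ₂ : Formula) : Formula := .neg (.conj (.neg φ₁) (.neg φ₂))

/-- Existential quantification `∃l·φ := ¬∀l·¬φ`. -/
def Formula.ex (l : String) (φ : Formula) : Formula := .neg (.all l (.neg φ))

/-- A program is purely probabilistic if it contains no demonic choice. -/
def DemFree : Stmt → Prop
  | .skip => True
  | .assign _ _ => True
  | .seq s₁ s₂ => DemFree s₁ ∧ DemFree s₂
  | .dem _ _ => False
  | .prob _ s₁ s₂ => DemFree s₁ ∧ DemFree s₂
  | .ifte _ s₁ s₂ => DemFree s₁ ∧ DemFree s₂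
  | .whileLoop _ s => DemFree s

theorem Step.prob_nonneg {π : Policy} {σ σ' : PState} {q : ℝ} (h : Step π σ q σ') : 0 ≤ q := by
  induction h with
  | probL h₀ _ => exact h₀
  | probR _ h₁ => linarith
  | seqSkip _ ih => exact ih
  | seqStep _ ih => exact ih
  | _ => exact zero_le_one

theorem MPath.prob_nonneg {π : Policy} {σ : PState} (ρ : MPath π σ) : 0 ≤ ρ.prob := by
  induction ρ with
  | nil => exact zero_le_one
  | cons _ h _ ih => exact mul_nonneg h.prob_nonneg ih

theorem expReward_nonneg (π : Policy) (σ : PState) {r : PVal → ℝ} (hr : ∀ ε, 0 ≤ r ε) :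
    0 ≤ expReward π σ r :=
  tsum_nonneg fun ρ => mul_nonneg ρ.prob_nonneg (hr _)

theorem expectation_nonneg (σ : PState) {r : PVal → ℝ} (hr : ∀ ε, 0 ≤ r ε) :
    0 ≤ expectation σ r :=
  Real.iInf_nonneg fun π => expReward_nonneg π σ hr

theorem ind_nonneg (P : Prop) : 0 ≤ ind P := by
  unfold ind; split <;> norm_num

theorem mul_ind_le_iff {a b : ℝ} (hb : 0 ≤ b) (P : Prop) : a * ind P ≤ b ↔ (P → a ≤ b) := by
  by_cases hP : P <;> simp [ind, hP, hb]

end PGCL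

open PGCL

theorem implication_elimination_general (s : Stmt) (φ₁ φ₂ : Formula)
    (p : PVal → ℝ) :
    (∀ (ε : PVal) (η : LEnv), Sat φ₁ ε η → Sat (.box s p φ₂) ε η) ↔
      (∀ (ε : PVal) (η : LEnv),
        Sat (.box s (fun ε' => p ε' * ind (Sat φ₁ ε' η)) φ₂) ε η) := by
  simp only [Sat]
  refine forall₂_congr fun ε η => (mul_ind_le_iff ?_ _).symm
  exact expectation_nonneg _ fun _ => ind_nonneg _

/-- Implication elimination: `φ₁ ⟹ [s]_p φ₂` is valid iff
    `[s]_{p↓φ₁} φ₂` is valid, where `(p↓φ₁)(σ) = p(σ)·[φ₁](σ)`. -/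
theorem implication_elimination (s : Stmt) (φ₁ φ₂ : Formula)
    (p : PVal → ℝ) (hp : ∀ ε', p ε' ∈ Set.Icc (0 : ℝ) 1) :
    (∀ (ε : PVal) (η : LEnv), Sat φ₁ ε η → Sat (.box s p φ₂) ε η) ↔
      (∀ (ε : PVal) (η : LEnv),
        Sat (.box s (fun ε' => p ε' * ind (Sat φ₁ ε' η)) φ₂) ε η) :=
  implication_elimination_general s φ₁ φ₂ p
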